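/- arXiv:2507.01138 — 4 statements merged into one kernel-verified Lean document; each statement's English description precedes it below -/
import Mathlib

section
/- For any abelian group H of order n, any graph G on n vertices with maximum degree d ≥ 1, and any subset U of H of size at most ⌈n/(2d)⌉ - 1, there exists a bijection f from the vertex set of G to H such that for every edge {u,v} of G, f(u) + f(v) ∉ U. -/
/-!
Let `K` be the graph on `H` joining distinct `a`, `b` with `a + b ∈ U`; its maximum degree is at
most `|U|`, and `f` must place `G` edge-disjointly from `K`. This is the Sauer–Spencer packing
theorem, which needs `2 Δ(G) Δ(K) < n`: take a bijection with the fewest overlapping edges. If an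
edge `uv` still overlaps, at most `2 Δ(G) Δ(K)` vertices `w` are ruled out, and swapping the
images of `u` and any other `w` removes the overlap `uv` without creating a new one.
-/

open Finset

namespace SimpleGraph

variable {V W : Type*} (G : SimpleGraph V) (K : SimpleGraph W)

def overlap [Fintype V] [DecidableRel G.Adj] [DecidableRel K.Adj] (f : V ≃ W) : Finset (V × V) :=
  {p | G.Adj p.1 p.2 ∧ K.Adj (f p.1) (f p.2)}

variable {G K} {f : V ≃ W} {u w : V}

@[simp]
lemma mem_overlap [Fintype V] [DecidableRel G.Adj] [DecidableRel K.Adj] {p : V × V} :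
    p ∈ overlap G K f ↔ G.Adj p.1 p.2 ∧ K.Adj (f p.1) (f p.2) := by
  simp [overlap]

lemma eq_swap_apply_of_adj_of_adj_swap [DecidableEq V]
    (hu : ∀ x, G.Adj u x → ¬K.Adj (f w) (f x)) (hw : ∀ x, G.Adj w x → ¬K.Adj (f u) (f x))
    {a b : V} (hab : G.Adj a b) (hK : K.Adj (f (Equiv.swap u w a)) (f (Equiv.swap u w b)))
    (ha : a = u ∨ a = w) : b = Equiv.swap u w a := by
  by_contra hb
  rcases ha with rfl | rfl
  · rw [Equiv.swap_apply_left] at hb hK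
    rw [Equiv.swap_apply_of_ne_of_ne hab.ne' hb] at hK
    exact hu b hab hK
  · rw [Equiv.swap_apply_right] at hb hK
    rw [Equiv.swap_apply_of_ne_of_ne hb hab.ne'] at hK
    exact hw b hab hK

lemma overlap_swap_ssubset [Fintype V] [DecidableEq V] [DecidableRel G.Adj] [DecidableRel K.Adj]
    {v : V} (huv : G.Adj u v) (hf : K.Adj (f u) (f v)) (hwv : w ≠ v)
    (hu : ∀ x, G.Adj u x → ¬K.Adj (f w) (f x)) (hw : ∀ x, G.Adj w x → ¬K.Adj (f u) (f x)) :
    overlap G K ((Equiv.swap u w).trans f) ⊂ overlap G K f := by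
  have hsub : overlap G K ((Equiv.swap u w).trans f) ⊆ overlap G K f := by
    rintro ⟨a, b⟩ hp
    simp only [mem_overlap, Equiv.trans_apply] at hp ⊢
    obtain ⟨hab, hK⟩ := hp
    refine ⟨hab, ?_⟩
    by_cases ha : a = u ∨ a = w
    · obtain rfl := eq_swap_apply_of_adj_of_adj_swap hu hw hab hK ha
      rw [Equiv.swap_apply_self] at hK
      exact hK.symm
    by_cases hb : b = u ∨ b = w
    · obtain rfl := eq_swap_apply_of_adj_of_adj_swap hu hw hab.symm hK.symm hb
      rw [Equiv.swap_apply_self] at hK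
      exact hK.symm
    simp only [not_or] at ha hb
    rwa [Equiv.swap_apply_of_ne_of_ne ha.1 ha.2, Equiv.swap_apply_of_ne_of_ne hb.1 hb.2] at hK
  refine ssubset_iff_of_subset hsub |>.2 ⟨(u, v), by simpa using ⟨huv, hf⟩, ?_⟩
  simp only [mem_overlap, Equiv.trans_apply, Equiv.swap_apply_left,
    Equiv.swap_apply_of_ne_of_ne huv.ne' hwv.symm, not_and]
  exact hu v

/-- Only `v` and the sets `B₁`, `B₂` below are ruled out; each has at most `d k` elements and both
contain `u`, so at most `2 d k` vertices are excluded. -/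
lemma exists_swap_partner [Fintype V] [DecidableEq V] [Fintype W] [DecidableRel G.Adj]
    [DecidableRel K.Adj] {d k : ℕ} (hG : ∀ x, G.degree x ≤ d) (hK : ∀ y, K.degree y ≤ k)
    (hcard : 2 * d * k < Fintype.card V) {v : V} (huv : G.Adj u v) (hf : K.Adj (f u) (f v)) :
    ∃ w ≠ v, (∀ x, G.Adj u x → ¬K.Adj (f w) (f x)) ∧ (∀ x, G.Adj w x → ¬K.Adj (f u) (f x)) := by
  set B₁ := (G.neighborFinset u).biUnion fun x ↦ (K.neighborFinset (f x)).map f.symm.toEmbedding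
  set B₂ := (K.neighborFinset (f u)).biUnion fun y ↦ G.neighborFinset (f.symm y)
  have hB₁ : #B₁ ≤ d * k := by
    refine (card_biUnion_le_card_mul _ _ k fun x _ ↦ ?_).trans ?_
    · rw [card_map, card_neighborFinset_eq_degree]
      exact hK (f x)
    · rw [card_neighborFinset_eq_degree]
      exact Nat.mul_le_mul_right k (hG u)
  have hB₂ : #B₂ ≤ k * d := by
    refine (card_biUnion_le_card_mul _ _ d fun y _ ↦ ?_).trans ?_
    · rw [card_neighborFinset_eq_degree]
      exact hG (f.symm y)
    · rw [card_neighborFinset_eq_degree]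
      exact Nat.mul_le_mul_right d (hK (f u))
  have hu₁ : u ∈ B₁ := by
    simpa [B₁] using ⟨v, huv, hf.symm⟩
  have hu₂ : u ∈ B₂ := by
    simpa [B₂] using ⟨f v, hf, by simpa using huv.symm⟩
  have hexcluded : #(insert v (B₁ ∪ B₂)) < #(univ : Finset V) := by
    have := card_union_add_card_inter B₁ B₂
    have := card_pos.2 ⟨u, mem_inter.2 ⟨hu₁, hu₂⟩⟩
    have := card_insert_le v (B₁ ∪ B₂)
    rw [card_univ]
    nlinarith
  obtain ⟨w, -, hw⟩ := exists_mem_notMem_of_card_lt_card hexcluded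
  simp only [B₁, B₂, mem_insert, mem_union, mem_biUnion, mem_neighborFinset, mem_map_equiv,
    Equiv.symm_symm, not_or, not_exists, not_and] at hw
  obtain ⟨hwv, hu, hw⟩ := hw
  exact ⟨w, hwv, fun x hux hK ↦ hu x hux hK.symm,
    fun x hwx hK ↦ hw (f x) hK (by simpa using hwx.symm)⟩

variable (G K) in
theorem exists_equiv_forall_adj_not_adj [Fintype V] [Fintype W] [DecidableRel G.Adj]
    [DecidableRel K.Adj] (hVW : Fintype.card V = Fintype.card W)
    (hcard : 2 * G.maxDegree * K.maxDegree < Fintype.card V) :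
    ∃ f : V ≃ W, ∀ u v, G.Adj u v → ¬K.Adj (f u) (f v) := by
  classical
  obtain ⟨f, -, hmin⟩ := exists_min_image univ (fun f ↦ #(overlap G K f))
    ⟨Fintype.equivOfCardEq hVW, mem_univ _⟩
  refine ⟨f, fun u v huv hf ↦ ?_⟩
  obtain ⟨w, hwv, hu, hw⟩ :=
    exists_swap_partner G.degree_le_maxDegree K.degree_le_maxDegree hcard huv hf
  exact (hmin _ (mem_univ _)).not_gt (card_lt_card (overlap_swap_ssubset huv hf hwv hu hw))

end SimpleGraph

def sumGraph {H : Type*} [AddCommMagma H] (U : Set H) : SimpleGraph H where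
  Adj a b := a ≠ b ∧ a + b ∈ U
  symm := ⟨fun a b h ↦ ⟨h.1.symm, add_comm a b ▸ h.2⟩⟩
  loopless := ⟨fun _ h ↦ h.1 rfl⟩

@[simp]
lemma sumGraph_adj {H : Type*} [AddCommMagma H] {U : Set H} {a b : H} :
    (sumGraph U).Adj a b ↔ a ≠ b ∧ a + b ∈ U :=
  Iff.rfl

lemma sumGraph_maxDegree_le {H : Type*} [AddCancelCommMonoid H] [Fintype H] (U : Finset H)
    [DecidableRel (sumGraph (U : Set H)).Adj] : (sumGraph (U : Set H)).maxDegree ≤ #U := by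
  refine SimpleGraph.maxDegree_le_of_forall_degree_le _ _ fun a ↦ ?_
  rw [← SimpleGraph.card_neighborFinset_eq_degree]
  exact card_le_card_of_injOn (a + ·) (fun b hb ↦ ((SimpleGraph.mem_neighborFinset _ _ _).1 hb).2)
    (add_right_injective a).injOn

lemma mul_lt_of_le_ceil_div_sub_one {α : Type*} [Field α] [LinearOrder α] [IsStrictOrderedRing α]
    [FloorRing α] {k m n : ℕ} (h : (k : ℤ) ≤ ⌈(n : α) / m⌉ - 1) : m * k < n := by
  have hlt : (k : α) < n / m := by
    exact_mod_cast Int.lt_ceil.1 (by omega : (k : ℤ) < ⌈(n : α) / m⌉)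
  rcases Nat.eq_zero_or_pos m with rfl | hm
  · rw [Nat.cast_zero, div_zero] at hlt
    exact absurd hlt (Nat.cast_nonneg k).not_gt
  · rw [lt_div_iff₀ (by exact_mod_cast hm)] at hlt
    rw [mul_comm]
    exact_mod_cast hlt

theorem stmt0_general (n d : ℕ) (H : Type*) [AddCommGroup H] [Fintype H]
    (hH : Fintype.card H = n) (G : SimpleGraph (Fin n)) [DecidableRel G.Adj]
    (hdeg : ∀ v, G.degree v ≤ d) (U : Finset H)
    (hU : (U.card : ℤ) ≤ ⌈(n : ℚ) / (2 * d)⌉ - 1) :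
    ∃ f : Fin n ≃ H, ∀ u v, G.Adj u v → f u + f v ∉ U := by
  classical
  have hcard : 2 * d * #U < n := mul_lt_of_le_ceil_div_sub_one (α := ℚ) (by exact_mod_cast hU)
  obtain ⟨f, hf⟩ := G.exists_equiv_forall_adj_not_adj (sumGraph (U : Set H)) (by simp [hH]) <|
    calc 2 * G.maxDegree * (sumGraph (U : Set H)).maxDegree ≤ 2 * d * #U := by
          gcongr
          · exact G.maxDegree_le_of_forall_degree_le d hdeg
          · exact sumGraph_maxDegree_le U
      _ < Fintype.card (Fin n) := by simpa using hcard
  exact ⟨f, fun u v huv hU ↦ hf u v huv (sumGraph_adj.2 ⟨f.injective.ne huv.ne, hU⟩)⟩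

theorem stmt0 (n d : ℕ) (hd : 1 ≤ d) (H : Type*) [AddCommGroup H] [Fintype H]
    (hH : Fintype.card H = n) (G : SimpleGraph (Fin n)) [DecidableRel G.Adj]
    (hdeg : ∀ v, G.degree v ≤ d) (U : Finset H)
    (hU : (U.card : ℤ) ≤ ⌈(n : ℚ) / (2 * d)⌉ - 1) :
    ∃ f : Fin n ≃ H, ∀ u v, G.Adj u v → f u + f v ∉ U :=
  stmt0_general n d H hH G hdeg U hU
end

section
/- For every graph G on n vertices with maximum degree at most d ≥ 1, the minimum sum-set size of G over any abelian group of order n is at most n - ⌈n/(2d)⌉ + 1. -/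
/-!
Fix `T ⊆ H` with `#T = ⌈n / 2d⌉ - 1`, so that `2 d #T < n`. It suffices to find a bijective
labelling `e` under which no edge sum lies in `T`: all edge sums then lie in the complement of `T`.
Take a bijection minimising the number of edges `uv` with `e u + e v ∈ T`. If there is such an
edge, at most `2 d #T - 1` vertices `w` would create a new sum in `T` when their label is swapped
with that of `u` (`u` itself is counted twice), so swapping `u` with some `w ≠ v` removes the
conflict at `uv` and creates none, contradicting minimality.
-/

open Finset

theorem Int.ceil_div_sub_one_mul_lt {K : Type*} [Field K] [LinearOrder K] [IsStrictOrderedRing K]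
    [FloorRing K] (x : K) {k : K} (hk : 0 < k) : ((⌈x / k⌉ - 1 : ℤ) : K) * k < x := by
  have := Int.ceil_lt_add_one (x / k)
  push_cast
  rwa [← lt_div_iff₀ hk, sub_lt_iff_lt_add]

section

variable {V H : Type*} [Fintype V] [AddCommGroup H] (G : SimpleGraph V) [DecidableRel G.Adj]
  {T : Finset H} {d : ℕ}

theorem card_filter_add_mem_le [DecidableEq H] {e : V → H} (he : e.Injective) (a : H) :
    #{w | e w + a ∈ T} ≤ #T :=
  card_le_card_of_injOn (e · + a) (fun _ hw ↦ (mem_filter.mp hw).2)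
    fun _ _ _ _ h ↦ he (add_right_cancel h)

theorem exists_swap_partner (hdeg : ∀ v, G.degree v ≤ d) (hT : 2 * d * #T < Fintype.card V)
    {e : V → H} (he : e.Injective) {u v : V} (huv : G.Adj u v) (hsum : e u + e v ∈ T) :
    ∃ w, w ≠ v ∧ (∀ x, G.Adj u x → e w + e x ∉ T) ∧ (∀ x, G.Adj w x → e u + e x ∉ T) := by
  classical
  set B₁ := (G.neighborFinset u).biUnion fun x ↦ ({w | e w + e x ∈ T} : Finset V)
  set B₂ := ({x | e u + e x ∈ T} : Finset V).biUnion fun x ↦ G.neighborFinset x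
  have hB₁ : #B₁ ≤ d * #T := by
    refine (card_biUnion_le_card_mul _ _ _ fun x _ ↦ card_filter_add_mem_le he (e x)).trans ?_
    rw [G.card_neighborFinset_eq_degree]
    exact Nat.mul_le_mul_right _ (hdeg u)
  have hB₂ : #B₂ ≤ #T * d := by
    refine (card_biUnion_le_card_mul _ _ d fun x _ ↦ ?_).trans ?_
    · rw [G.card_neighborFinset_eq_degree]; exact hdeg x
    · simp_rw [add_comm (e u)]
      exact Nat.mul_le_mul_right _ (card_filter_add_mem_le he (e u))
  have hu : u ∈ B₁ ∩ B₂ := by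
    simp only [B₁, B₂, mem_inter, mem_biUnion, mem_filter, mem_univ, true_and,
      SimpleGraph.mem_neighborFinset]
    exact ⟨⟨v, huv, hsum⟩, ⟨v, hsum, huv.symm⟩⟩
  have hcard : #(insert v (B₁ ∪ B₂)) < #(univ : Finset V) := by
    have := card_union_add_card_inter B₁ B₂
    have := card_pos.mpr ⟨u, hu⟩
    have := card_insert_le v (B₁ ∪ B₂)
    rw [card_univ]
    linarith
  obtain ⟨w, -, hw⟩ := exists_mem_notMem_of_card_lt_card hcard
  simp only [B₁, B₂, mem_insert, mem_union, mem_biUnion, mem_filter, mem_univ, true_and,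
    SimpleGraph.mem_neighborFinset, not_or, not_exists, not_and] at hw
  exact ⟨w, hw.1, fun x hx ↦ hw.2.1 x hx, fun x hx h ↦ hw.2.2 x h hx.symm⟩

variable [DecidableEq H]

def edgeSumConflicts (T : Finset H) (e : V → H) : Finset (V × V) :=
  {p | G.Adj p.1 p.2 ∧ e p.1 + e p.2 ∈ T}

theorem edgeSumConflicts_swap_ssubset [DecidableEq V] {e : V → H} {u v w : V} (huv : G.Adj u v)
    (hsum : e u + e v ∈ T) (hwv : w ≠ v) (h₁ : ∀ x, G.Adj u x → e w + e x ∉ T)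
    (h₂ : ∀ x, G.Adj w x → e u + e x ∉ T) :
    edgeSumConflicts G T (e ∘ Equiv.swap u w) ⊂ edgeSumConflicts G T e := by
  set σ := Equiv.swap u w
  have hmixed : ∀ a b, G.Adj a b → (a = u ∨ a = w) → b ≠ u → b ≠ w → e (σ a) + e (σ b) ∉ T := by
    rintro a b hab (rfl | rfl) hbu hbw <;>
      simp only [σ, Equiv.swap_apply_left, Equiv.swap_apply_right,
        Equiv.swap_apply_of_ne_of_ne hbu hbw]
    exacts [h₁ b hab, h₂ b hab]
  have hpres : ∀ a b, G.Adj a b → e (σ a) + e (σ b) ∈ T → e a + e b ∈ T := by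
    intro a b hab h
    by_cases ha : a = u ∨ a = w <;> by_cases hb : b = u ∨ b = w
    · have := hab.ne
      rcases ha with rfl | rfl <;> rcases hb with rfl | rfl <;>
        simp_all [σ, Equiv.swap_apply_left, Equiv.swap_apply_right, add_comm]
    · push Not at hb
      exact absurd h (hmixed a b hab ha hb.1 hb.2)
    · push Not at ha
      rw [add_comm] at h
      exact absurd h (hmixed b a hab.symm hb ha.1 ha.2)
    · push Not at ha hb
      rwa [Equiv.swap_apply_of_ne_of_ne ha.1 ha.2, Equiv.swap_apply_of_ne_of_ne hb.1 hb.2] at h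
  refine ssubset_of_subset_of_ne (fun p hp ↦ ?_) fun h ↦ ?_
  · simp only [edgeSumConflicts, mem_filter, mem_univ, true_and, Function.comp_apply] at hp ⊢
    exact ⟨hp.1, hpres _ _ hp.1 hp.2⟩
  · have huv' : (u, v) ∈ edgeSumConflicts G T e := by simpa [edgeSumConflicts] using ⟨huv, hsum⟩
    rw [← h] at huv'
    simp only [edgeSumConflicts, mem_filter, mem_univ, true_and, Function.comp_apply] at huv'
    exact hmixed u v huv (.inl rfl) huv.ne.symm hwv.symm huv'.2

end

theorem exists_equiv_forall_adj_add_notMem {V H : Type*} [Fintype V] [AddCommGroup H] [Fintype H]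
    (G : SimpleGraph V) [DecidableRel G.Adj] {T : Finset H} {d : ℕ}
    (hdeg : ∀ v, G.degree v ≤ d) (hT : 2 * d * #T < Fintype.card V)
    (hVH : Fintype.card V = Fintype.card H) :
    ∃ e : V ≃ H, ∀ u v, G.Adj u v → e u + e v ∉ T := by
  classical
  obtain ⟨e, -, hmin⟩ := exists_min_image univ (fun e : V ≃ H ↦ #(edgeSumConflicts G T e))
    ⟨Fintype.equivOfCardEq hVH, mem_univ _⟩
  refine ⟨e, fun u v huv hsum ↦ ?_⟩
  obtain ⟨w, hwv, h₁, h₂⟩ := exists_swap_partner G hdeg hT e.injective huv hsum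
  exact (hmin ((Equiv.swap u w).trans e) (mem_univ _)).not_gt
    (card_lt_card (edgeSumConflicts_swap_ssubset G huv hsum hwv h₁ h₂))

theorem stmt1 (n d : ℕ) (hd : 1 ≤ d) (G : SimpleGraph (Fin n)) [DecidableRel G.Adj]
    (hdeg : ∀ v, G.degree v ≤ d) (H : Type*) [AddCommGroup H] [Fintype H]
    (hH : Fintype.card H = n) :
    ∃ A : Fin n → H, Function.Injective A ∧
      (Set.ncard {h : H | ∃ u v, G.Adj u v ∧ A u + A v = h} : ℤ)
        ≤ (n : ℤ) - ⌈(n : ℚ) / (2 * d)⌉ + 1 := by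
  classical
  have hn : 0 < n := hH ▸ Fintype.card_pos
  have hc : 1 ≤ ⌈(n : ℚ) / (2 * d)⌉ := Int.one_le_ceil_iff.mpr (by positivity)
  have hcn : (⌈(n : ℚ) / (2 * d)⌉ - 1) * (2 * d) < n := by
    exact_mod_cast Int.ceil_div_sub_one_mul_lt (n : ℚ) (by positivity : (0 : ℚ) < 2 * d)
  obtain ⟨m, hm⟩ := Int.eq_ofNat_of_zero_le (sub_nonneg.mpr hc)
  rw [hm] at hcn
  have hmn : m ≤ n := by exact_mod_cast (by nlinarith : (m : ℤ) ≤ n)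
  obtain ⟨T, -, hT⟩ :=
    exists_subset_card_eq (s := (univ : Finset H)) (n := m) (by rwa [card_univ, hH])
  obtain ⟨e, he⟩ := exists_equiv_forall_adj_add_notMem G hdeg (T := T)
    (by rw [Fintype.card_fin, hT]; exact_mod_cast (by linarith : (2 * d * m : ℤ) < n))
    (by rw [Fintype.card_fin, hH])
  refine ⟨e, e.injective, ?_⟩
  have hsub : {h : H | ∃ u v, G.Adj u v ∧ e u + e v = h} ⊆ ↑Tᶜ := by
    rintro _ ⟨u, v, huv, rfl⟩
    simpa using he u v huv
  have := Set.ncard_le_ncard hsub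
  rw [Set.ncard_coe_finset, card_compl, hT, hH] at this
  omega
end

section
/- Let G be a connected graph on vertex set [n] with diameter less than D ≥ 1, H an abelian group, and A : [n] → H an injection with A(1) = 0. Write the edge sum-set A(E(G)) = {a₁,…,a_k}. Then there exist m = |E(G)| - (n-1) vectors f₁,…,f_m ∈ ℤ^k with |f_t|₁ ≤ 3D for all t, and an injection Ã : [n] → ℤ^k / Span_ℤ(f₁,…,f_m), such that every edge sum Ã(u)+Ã(v) over edges {u,v} of G lies in the image of the standard basis {e₁,…,e_k} under the quotient map π : ℤ^k → ℤ^k/Span_ℤ(f₁,…,f_m). -/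
/-!
Take a breadth-first spanning tree of `G` rooted at vertex `0`, and let `ψ : ℤ^k → H` send `eᵢ`
to the `i`-th element of the sum-set. Integrating along the tree with alternating signs gives
`P : [n] → ℤ^k` with `P 0 = 0` and `P u + P v = e_{A u + A v}` on tree edges, hence `ψ ∘ P = A`.
`P v` is a signed sum of `dist 0 v < D` basis vectors, so every non-tree edge `uv` yields a
relation `e_{A u + A v} - P u - P v` of `L¹`-norm below `2D`, and there are `|E| - (n - 1)` of
them. In the quotient by these relations all edge sums of `P` are basis vectors, and `P` stays
injective because `ψ` kills the relations.
-/

open Finset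

theorem sum_abs_sub_le {ι α : Type*} [Fintype ι] [AddCommGroup α] [LinearOrder α]
    [IsOrderedAddMonoid α] (x y : ι → α) :
    ∑ i, |(x - y) i| ≤ ∑ i, |x i| + ∑ i, |y i| :=
  (sum_le_sum fun i _ => abs_sub (x i) (y i)).trans_eq sum_add_distrib

theorem sum_abs_single {ι α : Type*} [Fintype ι] [DecidableEq ι] [AddCommGroup α] [LinearOrder α]
    [IsOrderedAddMonoid α] (j : ι) (a : α) :
    ∑ i, |(Pi.single j a : ι → α) i| = |a| := by
  simp [Pi.single_apply, apply_ite abs]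

theorem sum_abs_single_sub_sub_le {ι α : Type*} [Fintype ι] [DecidableEq ι] [AddCommGroup α]
    [LinearOrder α] [IsOrderedAddMonoid α] (j : ι) (a : α) (x y : ι → α) :
    ∑ i, |(Pi.single j a - x - y : ι → α) i| ≤ |a| + ∑ i, |x i| + ∑ i, |y i| := by
  have h := sum_abs_sub_le (Pi.single j a) x
  rw [sum_abs_single] at h
  exact (sum_abs_sub_le _ y).trans (add_le_add_left h _)

theorem Finset.exists_range_eq_of_card_eq {α : Type*} {s : Finset α} {m : ℕ} (h : #s = m) :
    ∃ σ : Fin m → α, Set.range σ = s := by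
  subst h
  exact ⟨Subtype.val ∘ s.equivFin.symm, by rw [s.equivFin.symm.surjective.range_comp]; simp⟩

theorem Set.Finite.exists_single_labelling {H : Type*} [AddCommGroup H] {S : Set H}
    (hS : S.Finite) {k : ℕ} (hk : S.ncard = k) :
    ∃ (lbl : H → Fin k → ℤ) (ψ : (Fin k → ℤ) →+ H),
      ∀ h ∈ S, ψ (lbl h) = h ∧ ∃ i, lbl h = Pi.single i 1 := by
  have := hS.to_subtype
  let e : S ≃ Fin k := (Finite.equivFin S).trans (finCongr (by rw [Nat.card_coe_set_eq, hk]))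
  classical
  refine ⟨fun h => if hh : h ∈ S then Pi.single (e ⟨h, hh⟩) 1 else 0,
    (Fintype.linearCombination ℤ fun i => (e.symm i : H)).toAddMonoidHom, fun h hh => ?_⟩
  refine ⟨?_, _, dif_pos hh⟩
  simp [dif_pos hh, Fintype.linearCombination_apply_single]

namespace SimpleGraph

variable {V : Type*} {G : SimpleGraph V}

theorem Connected.exists_adj_dist_add_one (hconn : G.Connected) {r v : V} (hv : v ≠ r) :
    ∃ u, G.Adj u v ∧ G.dist r u + 1 = G.dist r v := by
  obtain ⟨p, hp⟩ := hconn.exists_walk_length_eq_dist v r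
  cases p with
  | nil => exact absurd rfl hv
  | @cons _ u _ h q =>
    refine ⟨u, h.symm, le_antisymm ?_ ?_⟩
    · rw [dist_comm (u := r), dist_comm (u := r), ← hp, Walk.length_cons]
      exact Nat.add_le_add_right (G.dist_le q) 1
    · calc G.dist r v ≤ G.dist r u + G.dist u v := hconn.dist_triangle
        _ = G.dist r u + 1 := by rw [dist_eq_one_iff_adj.mpr h.symm]

open Classical in
/-- Defaults to `v` itself when `v` has no neighbour closer to `r`, e.g. at the root. -/
noncomputable def bfsParent (G : SimpleGraph V) (r v : V) : V :=
  if h : ∃ u, G.Adj u v ∧ G.dist r u + 1 = G.dist r v then h.choose else v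

theorem Connected.bfsParent_spec (hconn : G.Connected) {r v : V} (hv : v ≠ r) :
    G.Adj (G.bfsParent r v) v ∧ G.dist r (G.bfsParent r v) + 1 = G.dist r v := by
  have h := hconn.exists_adj_dist_add_one hv
  rw [bfsParent, dif_pos h]
  exact h.choose_spec

@[elab_as_elim]
theorem Connected.bfsParent_induction (hconn : G.Connected) (r : V) {motive : V → Prop}
    (root : motive r) (step : ∀ v, v ≠ r → motive (G.bfsParent r v) → motive v) (v : V) :
    motive v := by
  induction hd : G.dist r v using Nat.strong_induction_on generalizing v with
  | _ d ih =>
    by_cases hv : v = r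
    · exact hv ▸ root
    · have hpar := (hconn.bfsParent_spec hv).2
      exact step v hv (ih _ (by omega) _ rfl)

section Potential

variable {M : Type*} [AddCommGroup M]

/-- Its values at the two ends of a tree edge add up to the weight of that edge. -/
noncomputable def treePotential (G : SimpleGraph V) (r : V) (w : V → V → M) (v : V) : M :=
  if _ : G.dist r (G.bfsParent r v) < G.dist r v then
    w (G.bfsParent r v) v - G.treePotential r w (G.bfsParent r v)
  else 0
termination_by G.dist r v

theorem treePotential_self (r : V) (w : V → V → M) : G.treePotential r w r = 0 := by
  rw [treePotential, dif_neg (by simp)]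

theorem Connected.treePotential_of_ne (hconn : G.Connected) {r v : V} (w : V → V → M)
    (hv : v ≠ r) :
    G.treePotential r w v = w (G.bfsParent r v) v - G.treePotential r w (G.bfsParent r v) := by
  have hpar := (hconn.bfsParent_spec hv).2
  rw [treePotential, dif_pos (by omega)]

theorem Connected.map_treePotential {N : Type*} [AddCommGroup N] (hconn : G.Connected)
    (r : V) {w : V → V → M} (φ : M →+ N) {g : V → N} (hgr : g r = 0)
    (hφ : ∀ u v, G.Adj u v → φ (w u v) = g u + g v) (v : V) :
    φ (G.treePotential r w v) = g v := by
  induction v using hconn.bfsParent_induction r with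
  | root => rw [treePotential_self, map_zero, hgr]
  | step v hv ih =>
    rw [hconn.treePotential_of_ne w hv, map_sub, ih, hφ _ _ (hconn.bfsParent_spec hv).1]
    abel

theorem Connected.sum_abs_treePotential_le {ι : Type*} [Fintype ι] (hconn : G.Connected) (r : V)
    {w : V → V → ι → ℤ} (hw : ∀ u v, G.Adj u v → ∑ i, |w u v i| ≤ 1) (v : V) :
    ∑ i, |G.treePotential r w v i| ≤ G.dist r v := by
  induction v using hconn.bfsParent_induction r with
  | root => simp [treePotential_self]
  | step v hv ih =>
    obtain ⟨hadj, hdist⟩ := hconn.bfsParent_spec hv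
    rw [hconn.treePotential_of_ne w hv]
    have := hw _ _ hadj
    have := sum_abs_sub_le (w (G.bfsParent r v) v) (G.treePotential r w (G.bfsParent r v))
    push_cast [← hdist]
    linarith

end Potential

section BFSTree

variable [Fintype V] [DecidableEq V]

noncomputable def bfsTreeEdges (G : SimpleGraph V) (r : V) : Finset (Sym2 V) :=
  (univ.erase r).image fun v => s(G.bfsParent r v, v)

theorem Connected.bfsTreeEdges_subset [DecidableRel G.Adj] (hconn : G.Connected) (r : V) :
    G.bfsTreeEdges r ⊆ G.edgeFinset := by
  simp only [bfsTreeEdges, image_subset_iff, mem_erase, mem_edgeFinset, mem_edgeSet]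
  exact fun v ⟨hv, _⟩ => (hconn.bfsParent_spec hv).1

theorem Connected.card_bfsTreeEdges (hconn : G.Connected) (r : V) :
    #(G.bfsTreeEdges r) = Fintype.card V - 1 := by
  rw [bfsTreeEdges, card_image_of_injOn, card_erase_of_mem (mem_univ r), card_univ]
  intro a ha b hb hab
  have hda := (hconn.bfsParent_spec (ne_of_mem_erase ha)).2
  have hdb := (hconn.bfsParent_spec (ne_of_mem_erase hb)).2
  rcases Sym2.eq_iff.mp hab with ⟨-, h⟩ | ⟨h₁, h₂⟩
  · exact h
  · subst h₁
    rw [← h₂] at hdb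
    omega

end BFSTree

section Relations

variable [Fintype V] [DecidableEq V] [DecidableRel G.Adj] {M : Type*} [AddCommGroup M]

theorem Connected.exists_cycle_relations (hconn : G.Connected) (r : V) {w : V → V → M}
    (hw : ∀ u v, w u v = w v u) :
    ∃ f : Fin (#G.edgeFinset - (Fintype.card V - 1)) → M,
      (∀ t, ∃ u v, G.Adj u v ∧
        f t = w u v - G.treePotential r w u - G.treePotential r w v) ∧
      ∀ u v, G.Adj u v →
        w u v - G.treePotential r w u - G.treePotential r w v ∈ Submodule.span ℤ (Set.range f) := by
  set P := G.treePotential r w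
  let δ : Sym2 V → M :=
    Sym2.lift ⟨fun u v => w u v - P u - P v, fun u v => by dsimp only; rw [hw]; abel⟩
  have hδ_tree : ∀ e ∈ G.bfsTreeEdges r, δ e = 0 := by
    simp only [bfsTreeEdges, mem_image, mem_erase, forall_exists_index, and_imp]
    rintro _ v hv - rfl
    simp [δ, P, hconn.treePotential_of_ne w hv]
  have hcard : #(G.edgeFinset \ G.bfsTreeEdges r) = #G.edgeFinset - (Fintype.card V - 1) := by
    rw [card_sdiff_of_subset (hconn.bfsTreeEdges_subset r), hconn.card_bfsTreeEdges r]
  obtain ⟨σ, hσ⟩ := exists_range_eq_of_card_eq hcard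
  refine ⟨δ ∘ σ, fun t => ?_, fun u v huv => ?_⟩
  · have hσt : σ t ∈ G.edgeFinset \ G.bfsTreeEdges r := by
      rw [← mem_coe, ← hσ]; exact ⟨t, rfl⟩
    induction hσe : σ t using Sym2.inductionOn with
    | hf u v =>
      rw [hσe, mem_sdiff, mem_edgeFinset, mem_edgeSet] at hσt
      exact ⟨u, v, hσt.1, by simp [δ, hσe]⟩
  · by_cases htree : s(u, v) ∈ G.bfsTreeEdges r
    · have : w u v - P u - P v = 0 := hδ_tree _ htree
      rw [this]
      exact Submodule.zero_mem _
    · obtain ⟨t, ht⟩ : s(u, v) ∈ Set.range σ := by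
        rw [hσ, mem_coe, mem_sdiff, mem_edgeFinset]; exact ⟨huv, htree⟩
      exact Submodule.subset_span ⟨t, by simp [δ, ht]⟩

theorem Connected.exists_quotient_treePotential {N : Type*} [AddCommGroup N]
    (hconn : G.Connected) (r : V) {w : V → V → M} (hw : ∀ u v, w u v = w v u) (ψ : M →+ N)
    {g : V → N} (hg : Function.Injective g) (hgr : g r = 0)
    (hψ : ∀ u v, G.Adj u v → ψ (w u v) = g u + g v) :
    ∃ f : Fin (#G.edgeFinset - (Fintype.card V - 1)) → M,
      (∀ t, ∃ u v, G.Adj u v ∧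
        f t = w u v - G.treePotential r w u - G.treePotential r w v) ∧
      Function.Injective (fun v =>
        (Submodule.Quotient.mk (G.treePotential r w v) : M ⧸ Submodule.span ℤ (Set.range f))) ∧
      ∀ u v, G.Adj u v →
        (Submodule.Quotient.mk (G.treePotential r w u) + Submodule.Quotient.mk
          (G.treePotential r w v) : M ⧸ Submodule.span ℤ (Set.range f)) =
          Submodule.Quotient.mk (w u v) := by
  obtain ⟨f, hf, hspan⟩ := hconn.exists_cycle_relations r hw
  set P := G.treePotential r w
  have hψP : ∀ v, ψ (P v) = g v := hconn.map_treePotential r ψ hgr hψ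
  have hker : Submodule.span ℤ (Set.range f) ≤ LinearMap.ker ψ.toIntLinearMap := by
    rw [Submodule.span_le]
    rintro _ ⟨t, rfl⟩
    obtain ⟨u, v, huv, hfuv⟩ := hf t
    simp [hfuv, hψP, hψ u v huv]
  refine ⟨f, hf, fun a b hab => hg ?_, fun u v huv => ?_⟩
  · have := hker ((Submodule.Quotient.eq _).mp hab)
    rw [LinearMap.mem_ker, map_sub, sub_eq_zero] at this
    simpa [hψP] using this
  · rw [← Submodule.Quotient.mk_add, eq_comm, Submodule.Quotient.eq, ← sub_sub]
    exact hspan u v huv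

end Relations

end SimpleGraph

theorem stmt7_general (n D k : ℕ) (hn : 0 < n) (G : SimpleGraph (Fin n))
    [DecidableRel G.Adj] (hconn : G.Connected) (hdiam : ∀ u v, G.dist u v < D)
    (H : Type*) [AddCommGroup H] (A : Fin n → H) (hA : Function.Injective A)
    (hA1 : A ⟨0, hn⟩ = 0)
    (hk : Set.ncard {h : H | ∃ u v, G.Adj u v ∧ A u + A v = h} = k) :
    ∃ f : Fin (G.edgeFinset.card - (n - 1)) → (Fin k → ℤ),
      (∀ t, ∑ i, |f t i| ≤ 3 * (D : ℤ)) ∧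
      ∃ A2 : Fin n → ((Fin k → ℤ) ⧸ Submodule.span ℤ (Set.range f)),
        Function.Injective A2 ∧
        ∀ u v, G.Adj u v → ∃ i : Fin k,
          A2 u + A2 v = Submodule.Quotient.mk (Pi.single i 1) := by
  have hfin : {h : H | ∃ u v, G.Adj u v ∧ A u + A v = h}.Finite :=
    (Set.finite_range fun p : Fin n × Fin n => A p.1 + A p.2).subset
      fun _ ⟨u, v, _, huv⟩ => ⟨(u, v), huv⟩
  obtain ⟨lbl, ψ, hlbl⟩ := hfin.exists_single_labelling hk
  set w : Fin n → Fin n → Fin k → ℤ := fun u v => lbl (A u + A v)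
  have hw : ∀ u v, G.Adj u v → ∃ i, w u v = Pi.single i 1 := fun u v huv =>
    (hlbl _ ⟨u, v, huv, rfl⟩).2
  have hquot := hconn.exists_quotient_treePotential ⟨0, hn⟩ (w := w)
    (fun u v => by simp only [w, add_comm]) ψ hA hA1 fun u v huv => (hlbl _ ⟨u, v, huv, rfl⟩).1
  rw [Fintype.card_fin] at hquot
  obtain ⟨f, hf, hinj, hadd⟩ := hquot
  have hP : ∀ v, ∑ i, |G.treePotential ⟨0, hn⟩ w v i| < D := fun v =>
    (hconn.sum_abs_treePotential_le _ (fun u v huv => by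
      obtain ⟨i, hi⟩ := hw u v huv
      simp [hi, sum_abs_single]) v).trans_lt (by exact_mod_cast hdiam _ v)
  refine ⟨f, fun t => ?_, _, hinj, fun u v huv => ?_⟩
  · obtain ⟨u, v, huv, hfuv⟩ := hf t
    obtain ⟨i, hi⟩ := hw u v huv
    have := sum_abs_single_sub_sub_le i (1 : ℤ) (G.treePotential ⟨0, hn⟩ w u)
      (G.treePotential ⟨0, hn⟩ w v)
    rw [abs_one, ← hi, ← hfuv] at this
    have := hP u
    have := hP v
    omega
  · obtain ⟨i, hi⟩ := hw u v huv
    exact ⟨i, hi ▸ hadd u v huv⟩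

theorem stmt7 (n D k : ℕ) (hn : 0 < n) (hD : 1 ≤ D) (G : SimpleGraph (Fin n))
    [DecidableRel G.Adj] (hconn : G.Connected) (hdiam : ∀ u v, G.dist u v < D)
    (H : Type*) [AddCommGroup H] (A : Fin n → H) (hA : Function.Injective A)
    (hA1 : A ⟨0, hn⟩ = 0)
    (hk : Set.ncard {h : H | ∃ u v, G.Adj u v ∧ A u + A v = h} = k) :
    ∃ f : Fin (G.edgeFinset.card - (n - 1)) → (Fin k → ℤ),
      (∀ t, ∑ i, |f t i| ≤ 3 * (D : ℤ)) ∧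
      ∃ A2 : Fin n → ((Fin k → ℤ) ⧸ Submodule.span ℤ (Set.range f)),
        Function.Injective A2 ∧
        ∀ u v, G.Adj u v → ∃ i : Fin k,
          A2 u + A2 v = Submodule.Quotient.mk (Pi.single i 1) :=
  stmt7_general n D k hn G hconn hdiam H A hA hA1 hk
end

section
/- Let G be a graph on n vertices and k ≥ 3 an odd integer. If G contains μ_k cycles of length k, then for every injection A : V(G) → ℤ, the number of distinct edge sums |{A(u)+A(v) : {u,v} ∈ E(G)}| is at least μ_k^{1/k}. -/
/-!
Label the vertices of a closed walk of odd length `k` by `x₀, …, x_k = x₀`. If two such label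
sequences have the same edge sums `xᵢ + xᵢ₊₁`, their difference `d` satisfies `dᵢ₊₁ = -dᵢ`, so
`d_k = -d₀` as `k` is odd, and closing up gives `d₀ = -d₀`, hence `d = 0`. With `A` injective, a
closed walk of length `k` is thus determined by its word of `k` edge sums, so there are at most
`|S|^k` edge sets of `k`-cycles, `S` being the set of edge sums.
-/

open SimpleGraph

section AlternatingDifference

variable {M : Type*} [AddCommGroup M] {d : ℕ → M} {k : ℕ}

theorem eq_neg_one_pow_smul_of_add_succ_eq_zero (hd : ∀ i < k, d i + d (i + 1) = 0) :
    ∀ i ≤ k, d i = (-1 : ℤ) ^ i • d 0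
  | 0, _ => by rw [pow_zero, one_smul]
  | i + 1, hi => by
    rw [eq_neg_of_add_eq_zero_right (hd i hi),
      eq_neg_one_pow_smul_of_add_succ_eq_zero hd i (by omega), pow_succ, mul_neg_one, neg_smul]

theorem eq_zero_of_add_succ_eq_zero_of_odd [IsAddTorsionFree M] (hk : Odd k)
    (hd : ∀ i < k, d i + d (i + 1) = 0) (hclosed : d k = d 0) : ∀ i ≤ k, d i = 0 := by
  have alternating := eq_neg_one_pow_smul_of_add_succ_eq_zero hd
  have hd₀ : d 0 = -d 0 := calc
    d 0 = d k := hclosed.symm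
    _ = -d 0 := by rw [alternating k le_rfl, hk.neg_one_pow, neg_one_smul]
  intro i hi
  rw [alternating i hi, self_eq_neg.mp hd₀, smul_zero]

end AlternatingDifference

namespace SimpleGraph.Walk

variable {V M : Type*} {G : SimpleGraph V} [AddCommGroup M] [IsAddTorsionFree M]

theorem edges_eq_of_odd_of_getVert_add_eq {A : V → M} (hA : Function.Injective A) {u v : V}
    (p : G.Walk u u) (q : G.Walk v v) (hp : Odd p.length) (hlen : p.length = q.length)
    (hsum : ∀ i < p.length, A (p.getVert i) + A (p.getVert (i + 1)) =
      A (q.getVert i) + A (q.getVert (i + 1))) :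
    p.edges = q.edges := by
  have hvert : ∀ i ≤ p.length, p.getVert i = q.getVert i := fun i hi ↦
    hA <| sub_eq_zero.mp <| eq_zero_of_add_succ_eq_zero_of_odd
      (d := fun j ↦ A (p.getVert j) - A (q.getVert j)) hp
      (fun j hj ↦ by rw [← sub_eq_zero.mpr (hsum j hj)]; abel)
      (by simp only [getVert_zero, getVert_length]; rw [hlen, getVert_length]) i hi
  obtain rfl : u = v := by simpa only [getVert_zero] using hvert 0 (Nat.zero_le _)
  rw [ext_getVert_le_length hlen hvert]

end SimpleGraph.Walk

theorem SimpleGraph.ncard_closedWalk_edgeFinsets_le {V M : Type*} {G : SimpleGraph V}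
    [Finite V] [DecidableEq V] [AddCommGroup M] [IsAddTorsionFree M]
    {A : V → M} (hA : Function.Injective A) {k : ℕ} (hk : Odd k) :
    {s : Finset (Sym2 V) | ∃ (v : V) (w : G.Walk v v),
        w.length = k ∧ s = w.edges.toFinset}.ncard
      ≤ {s : M | ∃ u v, G.Adj u v ∧ A u + A v = s}.ncard ^ k := by
  set C := {s : Finset (Sym2 V) | ∃ (v : V) (w : G.Walk v v),
    w.length = k ∧ s = w.edges.toFinset}
  set S := {s : M | ∃ u v, G.Adj u v ∧ A u + A v = s}
  have : Finite S := (Set.finite_range fun e : V × V ↦ A e.1 + A e.2).subset <| by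
    rintro _ ⟨u, v, -, rfl⟩
    exact ⟨(u, v), rfl⟩
  choose vertex walk hlen hedges using fun s (hs : s ∈ C) ↦ hs
  let edgeSums : C → (Fin k → S) := fun s i ↦
    ⟨A ((walk s s.2).getVert i) + A ((walk s s.2).getVert (i + 1)),
      _, _, (walk s s.2).adj_getVert_succ (by rw [hlen]; exact i.2), rfl⟩
  have hinj : Function.Injective edgeSums := by
    rintro ⟨s, hs⟩ ⟨t, ht⟩ hst
    refine Subtype.ext <| (hedges s hs).trans <|
      .trans (congrArg List.toFinset ?_) (hedges t ht).symm
    refine Walk.edges_eq_of_odd_of_getVert_add_eq hA _ _ (by rwa [hlen]) (by rw [hlen, hlen])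
      fun i hi ↦ ?_
    exact congrArg Subtype.val (congrFun hst ⟨i, by rwa [← hlen s hs]⟩)
  calc C.ncard = Nat.card C := (Nat.card_coe_set_eq C).symm
    _ ≤ Nat.card (Fin k → S) := Nat.card_le_card_of_injective edgeSums hinj
    _ = S.ncard ^ k := by rw [Nat.card_fun, Nat.card_fin, Nat.card_coe_set_eq]

theorem stmt11_general (n k : ℕ) (hodd : Odd k)
    (G : SimpleGraph (Fin n)) (μ : ℕ)
    (hμ : μ = Set.ncard {s : Finset (Sym2 (Fin n)) | ∃ (v : Fin n) (w : G.Walk v v),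
        w.IsCycle ∧ w.length = k ∧ s = w.edges.toFinset})
    (A : Fin n → ℤ) (hA : Function.Injective A) :
    (μ : ℝ) ^ ((1 : ℝ) / k)
      ≤ Set.ncard {s : ℤ | ∃ u v, G.Adj u v ∧ A u + A v = s} := by
  set t := Set.ncard {s : ℤ | ∃ u v, G.Adj u v ∧ A u + A v = s}
  have hμt : μ ≤ t ^ k := by
    rw [hμ]
    refine le_trans (Set.ncard_le_ncard ?_) (G.ncard_closedWalk_edgeFinsets_le hA hodd)
    rintro _ ⟨v, w, -, hw⟩
    exact ⟨v, w, hw⟩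
  calc (μ : ℝ) ^ ((1 : ℝ) / k) ≤ ((t : ℝ) ^ k) ^ ((k : ℝ)⁻¹) := by
        rw [one_div]; gcongr; exact_mod_cast hμt
    _ = t := Real.pow_rpow_inv_natCast t.cast_nonneg (by rintro rfl; simp at hodd)

theorem stmt11 (n k : ℕ) (hk : 3 ≤ k) (hodd : Odd k)
    (G : SimpleGraph (Fin n)) (μ : ℕ)
    (hμ : μ = Set.ncard {s : Finset (Sym2 (Fin n)) | ∃ (v : Fin n) (w : G.Walk v v),
        w.IsCycle ∧ w.length = k ∧ s = w.edges.toFinset})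
    (A : Fin n → ℤ) (hA : Function.Injective A) :
    (μ : ℝ) ^ ((1 : ℝ) / k)
      ≤ Set.ncard {s : ℤ | ∃ u v, G.Adj u v ∧ A u + A v = s} :=
  stmt11_general n k hodd G μ hμ A hA
end
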